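/- arXiv:1210.6277 — 2 statements merged into one kernel-verified Lean document; each statement's English description precedes it below -/
import Mathlib

section
/- Let G be an infinite, connected simple graph with finite vertex-degrees, assume there exists a vertex with finite limsup_{n→∞} σ_n(·)^{1/n}, and let μ = lim_{n→∞} (sup_v σ_n(v))^{1/n}. If liminf_{n→∞} σ_n(v)^{1/n} = μ for some vertex v, then liminf_{n→∞} σ_n(u)^{1/n} = μ for every vertex u. -/
open Filter Topology
open scoped ENNReal

/-- The number of `n`-step self-avoiding walks in `G` starting at `v`. -/
noncomputable def sawCount {V : Type*} (G : SimpleGraph V) (v : V) (n : ℕ) : ℕ :=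
  Nat.card {p : Σ u : V, G.Walk v u // p.2.IsPath ∧ p.2.length = n}

/-- `limsup_{n→∞} σ_n(v)^{1/n}`, computed in `ℝ≥0∞`. -/
noncomputable def sawLimsup {V : Type*} (G : SimpleGraph V) (v : V) : ℝ≥0∞ :=
  Filter.limsup (fun n : ℕ => (sawCount G v n : ℝ≥0∞) ^ (1 / (n : ℝ))) Filter.atTop

/-- `liminf_{n→∞} σ_n(v)^{1/n}`, computed in `ℝ≥0∞`. -/
noncomputable def sawLiminf {V : Type*} (G : SimpleGraph V) (v : V) : ℝ≥0∞ :=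
  Filter.liminf (fun n : ℕ => (sawCount G v n : ℝ≥0∞) ^ (1 / (n : ℝ))) Filter.atTop

/-- `sup_v σ_n(v)`, computed in `ℝ≥0∞`. -/
noncomputable def sawSupE {V : Type*} (G : SimpleGraph V) (n : ℕ) : ℝ≥0∞ :=
  ⨆ v : V, (sawCount G v n : ℝ≥0∞)

/-!
Every vertex has `limsup σ_n^{1/n} ≤ μ`, so by connectivity it suffices to show that
`liminf σ_n(u)^{1/n} = μ` forces `liminf σ_n(v)^{1/n} ≥ μ` for every neighbour `v` of `u`.
Two counting inequalities drive this: submultiplicativity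
`σ_{n+k}(v) ≤ σ_n(v) · sup_w σ_k(w)`, and, for adjacent `u` and `v`,
`σ_n(u) ≤ σ_{n+1}(v) + ∑_{t ≤ n} σ_t(v) σ_{n-t}(v)`
(a self-avoiding walk from `u` either avoids `v`, and then `v` can be prepended to it, or it is
cut at `v` into two walks from `v`).
If `σ_{n₀}(v) ≤ a^{n₀}` with `a < μ`, submultiplicativity keeps `σ_j(v) ≤ A^j` for some `A < μ`
on a whole window `N ≤ j ≤ 2N + 1` with `N ≈ n₀`. Every term of the convolution at `2N` has an
index in that window, so `σ_{2N}(u) ≤ poly(N) · (AB)^N`, where `σ_i(v) ≤ D · B^i` for all `i`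
and `AB < μ²`, contradicting `liminf σ_n(u)^{1/n} = μ`. The same neighbour inequality shows
that finiteness of `limsup σ_n^{1/n}` spreads along edges, which makes `μ` finite.
-/

namespace SimpleGraph.Walk

variable {V : Type*} {G : SimpleGraph V}

lemma take_append_drop {u v : V} (p : G.Walk u v) (n : ℕ) :
    (p.take n).append (p.drop n) = p := by
  induction p generalizing n with
  | nil => cases n <;> rfl
  | cons h q ih => cases n with
    | zero => simp
    | succ n => simp [take, drop, ih]

lemma sigma_ext_support {v : V} {p q : Σ u, G.Walk v u} (h : p.2.support = q.2.support) :
    p = q := by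
  obtain ⟨u, p⟩ := p
  obtain ⟨w, q⟩ := q
  obtain rfl : u = w := by rw [← p.getLast_support, ← q.getLast_support]; simp only [h]
  obtain rfl : p = q := support_injective h
  rfl

end SimpleGraph.Walk

namespace SimpleGraph

variable {V : Type*} {G : SimpleGraph V}

lemma Reachable.induction_on_adj {P : V → Prop} (hP : ∀ ⦃a b⦄, G.Adj a b → P a → P b)
    {u v : V} (h : G.Reachable u v) (hu : P u) : P v := by
  rw [reachable_iff_reflTransGen] at h
  induction h with
  | refl => exact hu
  | tail _ hbc ih => exact hP hbc ih

end SimpleGraph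

open SimpleGraph Finset

section SelfAvoidingWalks

variable {V : Type*} {G : SimpleGraph V}

abbrev SAW (G : SimpleGraph V) (v : V) (n : ℕ) : Type _ :=
  {p : Σ u : V, G.Walk v u // p.2.IsPath ∧ p.2.length = n}

instance [G.LocallyFinite] (v : V) (n : ℕ) :
    Finite {p : Σ u : V, G.Walk v u // p.2.length = n} := by
  induction n generalizing v with
  | zero =>
    refine Finite.of_surjective (α := Unit) (fun _ => ⟨⟨v, .nil⟩, rfl⟩) ?_
    rintro ⟨⟨u, _ | _⟩, hp⟩
    · exact ⟨(), rfl⟩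
    · simp at hp
  | succ n ih =>
    refine Finite.of_surjective
      (α := Σ w : G.neighborSet v, {p : Σ u : V, G.Walk w u // p.2.length = n})
      (fun q => ⟨⟨q.2.1.1, .cons q.1.2 q.2.1.2⟩, congrArg (· + 1) q.2.2⟩) ?_
    rintro ⟨⟨u, _ | ⟨h, q⟩⟩, hq⟩
    · simp at hq
    · exact ⟨⟨⟨_, h⟩, ⟨⟨u, q⟩, by simpa using hq⟩⟩, rfl⟩

instance [G.LocallyFinite] (v : V) (n : ℕ) : Finite (SAW G v n) :=
  Finite.of_injective _ (Subtype.impEmbedding _ _ fun _ hp => hp.2).injective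

lemma sawCount_add_le [G.LocallyFinite] (v : V) (n k : ℕ) :
    (sawCount G v (n + k) : ℝ≥0∞) ≤ sawCount G v n * sawSupE G k := by
  have := Fintype.ofFinite (SAW G v n)
  let split : SAW G v (n + k) → Σ q : SAW G v n, SAW G q.1.1 k := fun p =>
    ⟨⟨⟨_, p.1.2.take n⟩, p.2.1.take n, by simp [p.2.2]⟩,
      ⟨⟨_, p.1.2.drop n⟩, p.2.1.drop n, by simp [p.2.2]⟩⟩
  let glue : (Σ q : SAW G v n, SAW G q.1.1 k) → Σ u, G.Walk v u :=
    fun q => ⟨_, q.1.1.2.append q.2.1.2⟩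
  have h_split : Function.Injective split := by
    refine Function.Injective.of_comp (f := glue) ?_
    have : glue ∘ split = Subtype.val := funext fun p => by
      simp only [Function.comp_apply, glue, split, Walk.take_append_drop]
    exact this ▸ Subtype.val_injective
  calc (sawCount G v (n + k) : ℝ≥0∞)
      ≤ Nat.card (Σ q : SAW G v n, SAW G q.1.1 k) := by
        exact_mod_cast Nat.card_le_card_of_injective split h_split
    _ = ∑ q : SAW G v n, (sawCount G q.1.1 k : ℝ≥0∞) := by
        rw [Nat.card_sigma]; push_cast; rfl
    _ ≤ ∑ _q : SAW G v n, sawSupE G k :=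
        sum_le_sum fun q _ => le_iSup (fun u => (sawCount G u k : ℝ≥0∞)) q.1.1
    _ = sawCount G v n * sawSupE G k := by
        rw [sum_const, card_univ, nsmul_eq_mul, ← Nat.card_eq_fintype_card]; rfl

lemma sawCount_le_of_adj [G.LocallyFinite] {u v : V} (huv : G.Adj u v) (n : ℕ) :
    sawCount G v n ≤ sawCount G u (n + 1) +
      ∑ t ∈ range (n + 1), sawCount G u t * sawCount G u (n - t) := by
  classical
  let split : SAW G v n → SAW G u (n + 1) ⊕ Σ t : Fin (n + 1), SAW G u t × SAW G u (n - t) :=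
    fun p => if hu : u ∈ p.1.2.support then
      .inr ⟨⟨_, (List.idxOf_lt_length_of_mem hu).trans_eq (by simp [p.2.2])⟩,
        ⟨⟨_, (p.1.2.takeUntil u hu).reverse⟩, (p.2.1.takeUntil hu).reverse,
          by simp [Walk.length_takeUntil]⟩,
        ⟨⟨_, p.1.2.dropUntil u hu⟩, p.2.1.dropUntil hu, by simp [Walk.length_dropUntil, p.2.2]⟩⟩
    else .inl ⟨⟨_, .cons huv p.1.2⟩, p.2.1.cons hu, by simp [p.2.2]⟩
  let glue : (SAW G u (n + 1) ⊕ Σ t : Fin (n + 1), SAW G u t × SAW G u (n - t)) → List V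
    | .inl q => q.1.2.support.tail
    | .inr ⟨_, q, r⟩ => q.1.2.support.reverse ++ r.1.2.support.tail
  have h_split : Function.Injective split := by
    refine Function.Injective.of_comp (f := glue) ?_
    have : glue ∘ split = fun p => p.1.2.support := funext fun p => by
      by_cases hu : u ∈ p.1.2.support
      · simp only [Function.comp_apply, split, dif_pos hu, glue, Walk.support_reverse,
          List.reverse_reverse, ← Walk.support_append, Walk.take_spec]
      · simp only [Function.comp_apply, split, dif_neg hu, glue, Walk.support_cons,
          List.tail_cons]
    rw [this]
    exact fun p q h => Subtype.ext (Walk.sigma_ext_support h)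
  calc sawCount G v n
      ≤ Nat.card (SAW G u (n + 1) ⊕ Σ t : Fin (n + 1), SAW G u t × SAW G u (n - t)) :=
        Nat.card_le_card_of_injective split h_split
    _ = sawCount G u (n + 1) +
          ∑ t ∈ range (n + 1), sawCount G u t * sawCount G u (n - t) := by
        rw [Nat.card_sum, Nat.card_sigma, ← Fin.sum_univ_eq_sum_range]
        simp only [Nat.card_prod]
        rfl

end SelfAvoidingWalks

section RealSequences

lemma exists_forall_le_mul_pow {c : ℕ → ℝ} {B : ℝ} (hc : ∀ n, 0 ≤ c n) (hB : 0 < B)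
    (h : ∀ᶠ n in atTop, c n ≤ B ^ n) : ∃ D, ∀ n, c n ≤ D * B ^ n := by
  obtain ⟨K, hK⟩ := eventually_atTop.mp h
  have hterm : ∀ i, 0 ≤ c i / B ^ i := fun i => div_nonneg (hc i) (by positivity)
  have hD : 1 ≤ 1 + ∑ i ∈ range K, c i / B ^ i :=
    le_add_of_nonneg_right (sum_nonneg fun i _ => hterm i)
  refine ⟨1 + ∑ i ∈ range K, c i / B ^ i, fun n => ?_⟩
  rcases lt_or_ge n K with hn | hn
  · calc c n = c n / B ^ n * B ^ n := by field_simp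
      _ ≤ (1 + ∑ i ∈ range K, c i / B ^ i) * B ^ n := by
        gcongr
        exact (single_le_sum (fun i _ => hterm i) (mem_range.mpr hn)).trans
          (le_add_of_nonneg_left zero_le_one)
  · exact (hK n hn).trans (le_mul_of_one_le_left (by positivity) hD)

lemma sum_mul_le_of_le_mul_pow {c : ℕ → ℝ} {B D : ℝ} (hc : ∀ n, 0 ≤ c n)
    (hD : ∀ n, c n ≤ D * B ^ n) (n : ℕ) :
    ∑ t ∈ range (n + 1), c t * c (n - t) ≤ (n + 1) * (D ^ 2 * B ^ n) := by
  have hterm : ∀ t ∈ range (n + 1), c t * c (n - t) ≤ D ^ 2 * B ^ n := fun t ht => by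
    calc c t * c (n - t) ≤ D * B ^ t * (D * B ^ (n - t)) :=
          mul_le_mul (hD t) (hD _) (hc _) ((hc t).trans (hD t))
      _ = D ^ 2 * (B ^ t * B ^ (n - t)) := by ring
      _ = D ^ 2 * B ^ n := by rw [← pow_add, Nat.add_sub_cancel' (mem_range_succ_iff.mp ht)]
  simpa using sum_le_card_nsmul _ _ _ hterm

lemma pow_mul_pow_sub_le_mul_pow {A B : ℝ} (hA : 0 ≤ A) (hAB : A ≤ B) {t N : ℕ} (ht : t ≤ N) :
    B ^ t * A ^ (2 * N - t) ≤ (A * B) ^ N := by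
  obtain ⟨s, rfl⟩ := Nat.exists_eq_add_of_le ht
  calc B ^ t * A ^ (2 * (t + s) - t) = (A * B) ^ t * (A * A) ^ s := by
        rw [show 2 * (t + s) - t = t + 2 * s by omega, pow_add, pow_mul]; ring
    _ ≤ (A * B) ^ t * (A * B) ^ s := by
        have hAB₀ : 0 ≤ A * B := mul_nonneg hA (hA.trans hAB)
        gcongr
    _ = (A * B) ^ (t + s) := (pow_add _ _ _).symm

lemma mul_sub_le_of_window {c : ℕ → ℝ} {A B D : ℝ} {N : ℕ} (hc : ∀ n, 0 ≤ c n) (hA : 0 ≤ A)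
    (hAB : A ≤ B) (hD : ∀ n, c n ≤ D * B ^ n) (hwin : ∀ j, N ≤ j → j ≤ 2 * N → c j ≤ A ^ j)
    {t : ℕ} (ht : t ≤ 2 * N) : c t * c (2 * N - t) ≤ D * (A * B) ^ N := by
  wlog htN : t ≤ N generalizing t
  · have := this (t := 2 * N - t) (by omega) (by omega)
    rwa [Nat.sub_sub_self ht, mul_comm] at this
  calc c t * c (2 * N - t) ≤ D * B ^ t * A ^ (2 * N - t) :=
        mul_le_mul (hD t) (hwin _ (by omega) (by omega)) (hc _) ((hc t).trans (hD t))
    _ = D * (B ^ t * A ^ (2 * N - t)) := mul_assoc _ _ _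
    _ ≤ D * (A * B) ^ N := by
        have hD₀ : 0 ≤ D := (hc 0).trans (by simpa using hD 0)
        gcongr
        exact pow_mul_pow_sub_le_mul_pow hA hAB htN

lemma le_pow_of_submul_of_le_pow {c : ℕ → ℝ} {a A B : ℝ} {K n₀ M : ℕ} (ha : 0 ≤ a) (hA : 0 < A)
    (hAB : A ≤ B) (haB : a * B ^ 2 ≤ A ^ 3) (hsplit : ∀ n k, K ≤ k → c (n + k) ≤ c n * B ^ k)
    (hdip : c n₀ ≤ a ^ n₀) (hM : n₀ + K ≤ M) (hM' : M ≤ 3 * n₀) : c M ≤ A ^ M := by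
  obtain ⟨s, rfl⟩ := Nat.exists_eq_add_of_le (le_of_add_le_left hM)
  have hB : 0 < B := hA.trans_le hAB
  have hr : 0 < B ^ (2 * n₀ - s) := by positivity
  calc c (n₀ + s) ≤ a ^ n₀ * B ^ s :=
        (hsplit n₀ s (by omega)).trans (mul_le_mul_of_nonneg_right hdip (by positivity))
    _ ≤ A ^ (n₀ + s) := by
        refine le_of_mul_le_mul_right ?_ hr
        calc a ^ n₀ * B ^ s * B ^ (2 * n₀ - s) = (a * B ^ 2) ^ n₀ := by
              rw [mul_assoc, ← pow_add, show s + (2 * n₀ - s) = 2 * n₀ by omega, mul_pow,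
                ← pow_mul]
          _ ≤ (A ^ 3) ^ n₀ := by gcongr
          _ = A ^ (n₀ + s) * A ^ (2 * n₀ - s) := by
              rw [← pow_mul, ← pow_add]; congr 1; omega
          _ ≤ A ^ (n₀ + s) * B ^ (2 * n₀ - s) := by gcongr

lemma eventually_affine_mul_pow_lt_pow {q g : ℝ} (C₀ C₁ : ℝ) (hq : 0 ≤ q) (hqg : q < g) :
    ∀ᶠ N : ℕ in atTop, (C₀ + C₁ * N) * q ^ N < g ^ N := by
  have hg : 0 < g := hq.trans_lt hqg
  have hr : q / g < 1 := (div_lt_one hg).mpr hqg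
  have hlim : Tendsto (fun N : ℕ => C₀ * (q / g) ^ N + C₁ * (N * (q / g) ^ N)) atTop (𝓝 0) := by
    simpa using ((tendsto_pow_atTop_nhds_zero_of_lt_one (by positivity) hr).const_mul C₀).add
      ((tendsto_self_mul_const_pow_of_lt_one (by positivity) hr).const_mul C₁)
  filter_upwards [hlim.eventually (gt_mem_nhds one_pos)] with N hN
  have hgN : 0 < g ^ N := by positivity
  calc (C₀ + C₁ * N) * q ^ N
      = (C₀ * (q / g) ^ N + C₁ * (N * (q / g) ^ N)) * g ^ N := by
        rw [div_pow]; field_simp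
    _ < 1 * g ^ N := by gcongr
    _ = g ^ N := one_mul _

lemma exists_window_constants {m a : ℝ} (hm : 0 < m) (ham : a < m) :
    ∃ A B γ : ℝ, 0 < A ∧ A ≤ B ∧ m < B ∧ a * B ^ 2 ≤ A ^ 3 ∧ A * B < γ ^ 2 ∧ 0 ≤ γ ∧ γ < m := by
  obtain ⟨ε, hε, hεa, hεm⟩ : ∃ ε : ℝ, 0 < ε ∧ 8 * ε ≤ m - a ∧ 8 * ε ≤ m :=
    ⟨min ((m - a) / 8) (m / 8), by positivity,
      by linarith [min_le_left ((m - a) / 8) (m / 8)],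
      by linarith [min_le_right ((m - a) / 8) (m / 8)]⟩
  refine ⟨m - 2 * ε, m + ε, m - ε / 8, by linarith, by linarith, by linarith, ?_, by nlinarith,
    by linarith, by linarith⟩
  calc a * (m + ε) ^ 2 ≤ (m - 8 * ε) * (m + ε) ^ 2 := by gcongr; linarith
    _ ≤ (m - 2 * ε) ^ 3 := by nlinarith [mul_pos (mul_pos hε hε) hm]

theorem eventually_pow_le_of_le_succ_add_convolution {c d : ℕ → ℝ} {m a : ℝ}
    (hc : ∀ n, 0 ≤ c n) (hm : 0 < m) (ha : 0 ≤ a) (ham : a < m)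
    (hup : ∀ B, m < B → ∀ᶠ n in atTop, c n ≤ B ^ n)
    (hsplit : ∀ B, m < B → ∀ᶠ k in atTop, ∀ n, c (n + k) ≤ c n * B ^ k)
    (hd : ∀ γ, 0 ≤ γ → γ < m → ∀ᶠ n in atTop, γ ^ n ≤ d n)
    (hdc : ∀ n, d n ≤ c (n + 1) + ∑ t ∈ range (n + 1), c t * c (n - t)) :
    ∀ᶠ n in atTop, a ^ n ≤ c n := by
  obtain ⟨A, B, γ, hA, hAB, hmB, haB, hABγ, hγ, hγm⟩ := exists_window_constants hm ham
  obtain ⟨D, hD⟩ := exists_forall_le_mul_pow hc (hm.trans hmB) (hup B hmB)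
  obtain ⟨K, hK⟩ := eventually_atTop.mp (hsplit B hmB)
  obtain ⟨N₀, hN₀⟩ := eventually_atTop.mp <|
    ((tendsto_id.const_mul_atTop' two_pos).eventually (hd γ hγ hγm)).and
      (eventually_affine_mul_pow_lt_pow (A + D) (2 * D) (mul_pos hA (hA.trans_le hAB)).le hABγ)
  by_contra hfreq
  obtain ⟨n₀, hn₀, hdip⟩ := frequently_atTop.mp (not_eventually.mp hfreq) (2 * K + 1 + N₀)
  -- `n₀ ≥ 2K + 1` puts the window `[N, 2N + 1]` inside `[n₀ + K, 3n₀]`.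
  set N := n₀ + K
  have hwin : ∀ j, N ≤ j → j ≤ 2 * N + 1 → c j ≤ A ^ j := fun j hj hj' =>
    le_pow_of_submul_of_le_pow ha hA hAB haB (fun n k hk => hK k hk n) (not_le.mp hdip).le hj
      (by omega)
  have hsum : ∑ t ∈ range (2 * N + 1), c t * c (2 * N - t) ≤ (2 * N + 1) * (D * (A * B) ^ N) := by
    simpa using sum_le_card_nsmul _ _ _ fun t ht =>
      mul_sub_le_of_window hc hA.le hAB hD (fun j hj hj' => hwin j hj (by omega))
        (mem_range_succ_iff.mp ht)
  have hlast : c (2 * N + 1) ≤ A * (A * B) ^ N := calc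
    c (2 * N + 1) ≤ A ^ (2 * N + 1) := hwin _ (by omega) le_rfl
    _ = A * (A * A) ^ N := by ring
    _ ≤ A * (A * B) ^ N := by gcongr
  obtain ⟨hlow, hpoly⟩ := hN₀ N (by omega)
  have : (γ ^ 2) ^ N ≤ (A + D + 2 * D * N) * (A * B) ^ N := calc
    (γ ^ 2) ^ N = γ ^ (2 * N) := (pow_mul _ _ _).symm
    _ ≤ d (2 * N) := hlow
    _ ≤ A * (A * B) ^ N + (2 * N + 1) * (D * (A * B) ^ N) := (hdc _).trans (add_le_add hlast hsum)
    _ = (A + D + 2 * D * N) * (A * B) ^ N := by ring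
  exact this.not_gt hpoly

end RealSequences

namespace ENNReal

lemma rpow_one_div_le_ofReal_iff {x : ℝ≥0∞} {b : ℝ} {n : ℕ} (hn : n ≠ 0) (hb : 0 ≤ b) :
    x ^ (1 / (n : ℝ)) ≤ ENNReal.ofReal b ↔ x ≤ ENNReal.ofReal (b ^ n) := by
  rw [one_div, rpow_inv_le_iff (by positivity), rpow_natCast, ofReal_pow hb]

lemma ofReal_le_rpow_one_div_iff {x : ℝ≥0∞} {b : ℝ} {n : ℕ} (hn : n ≠ 0) (hb : 0 ≤ b) :
    ENNReal.ofReal b ≤ x ^ (1 / (n : ℝ)) ↔ ENNReal.ofReal (b ^ n) ≤ x := by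
  rw [one_div, le_rpow_inv_iff (by positivity), rpow_natCast, ofReal_pow hb]

end ENNReal

section NthRoots

variable {c : ℕ → ℕ} {b : ℝ}

lemma natCast_rpow_one_div_le_ofReal_iff {k n : ℕ} (hn : n ≠ 0) (hb : 0 ≤ b) :
    (k : ℝ≥0∞) ^ (1 / (n : ℝ)) ≤ ENNReal.ofReal b ↔ (k : ℝ) ≤ b ^ n := by
  rw [ENNReal.rpow_one_div_le_ofReal_iff hn hb, ← ENNReal.ofReal_natCast,
    ENNReal.ofReal_le_ofReal_iff (by positivity)]

lemma ofReal_le_natCast_rpow_one_div_iff {k n : ℕ} (hn : n ≠ 0) (hb : 0 ≤ b) :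
    ENNReal.ofReal b ≤ (k : ℝ≥0∞) ^ (1 / (n : ℝ)) ↔ b ^ n ≤ k := by
  rw [ENNReal.ofReal_le_rpow_one_div_iff hn hb, ENNReal.ofReal_le_natCast]

lemma eventually_le_pow_of_limsup_lt (hb : 0 ≤ b)
    (h : limsup (fun n => (c n : ℝ≥0∞) ^ (1 / (n : ℝ))) atTop < ENNReal.ofReal b) :
    ∀ᶠ n in atTop, (c n : ℝ) ≤ b ^ n := by
  filter_upwards [eventually_lt_of_limsup_lt h, eventually_ne_atTop 0] with n hn hn₀
  exact (natCast_rpow_one_div_le_ofReal_iff hn₀ hb).mp hn.le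

lemma eventually_pow_le_of_lt_liminf (hb : 0 ≤ b)
    (h : ENNReal.ofReal b < liminf (fun n => (c n : ℝ≥0∞) ^ (1 / (n : ℝ))) atTop) :
    ∀ᶠ n in atTop, b ^ n ≤ c n := by
  filter_upwards [eventually_lt_of_lt_liminf h, eventually_ne_atTop 0] with n hn hn₀
  exact (ofReal_le_natCast_rpow_one_div_iff hn₀ hb).mp hn.le

lemma limsup_le_ofReal_of_eventually_le_pow (hb : 0 ≤ b)
    (h : ∀ᶠ n in atTop, (c n : ℝ) ≤ b ^ n) :
    limsup (fun n => (c n : ℝ≥0∞) ^ (1 / (n : ℝ))) atTop ≤ ENNReal.ofReal b :=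
  limsup_le_of_le (by isBoundedDefault) <| by
    filter_upwards [h, eventually_ne_atTop 0] with n hn hn₀
    exact (natCast_rpow_one_div_le_ofReal_iff hn₀ hb).mpr hn

lemma ofReal_le_liminf_of_eventually_pow_le (hb : 0 ≤ b)
    (h : ∀ᶠ n in atTop, b ^ n ≤ c n) :
    ENNReal.ofReal b ≤ liminf (fun n => (c n : ℝ≥0∞) ^ (1 / (n : ℝ))) atTop :=
  le_liminf_of_le (by isBoundedDefault) <| by
    filter_upwards [h, eventually_ne_atTop 0] with n hn hn₀
    exact (ofReal_le_natCast_rpow_one_div_iff hn₀ hb).mpr hn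

end NthRoots

section SawGrowth

variable {V : Type*} {G : SimpleGraph V} {μ : ℝ≥0∞}

lemma sawLiminf_le_sawLimsup (v : V) : sawLiminf G v ≤ sawLimsup G v := liminf_le_limsup

lemma sawLimsup_le (hμ : Tendsto (fun n : ℕ => sawSupE G n ^ (1 / (n : ℝ))) atTop (𝓝 μ))
    (v : V) : sawLimsup G v ≤ μ :=
  hμ.limsup_eq ▸ limsup_le_limsup (Eventually.of_forall fun n =>
    ENNReal.rpow_le_rpow (le_iSup (fun u => (sawCount G u n : ℝ≥0∞)) v) (by positivity))

lemma eventually_sawCount_add_le [G.LocallyFinite]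
    (hμ : Tendsto (fun n : ℕ => sawSupE G n ^ (1 / (n : ℝ))) atTop (𝓝 μ))
    {B : ℝ} (hB₀ : 0 ≤ B) (hB : μ < ENNReal.ofReal B) (v : V) :
    ∀ᶠ k in atTop, ∀ n, (sawCount G v (n + k) : ℝ) ≤ sawCount G v n * B ^ k := by
  filter_upwards [hμ.eventually_lt_const hB, eventually_ne_atTop 0] with k hk hk₀ n
  have hS : sawSupE G k ≤ ENNReal.ofReal (B ^ k) :=
    (ENNReal.rpow_one_div_le_ofReal_iff hk₀ hB₀).mp hk.le
  have := (sawCount_add_le v n k).trans (mul_le_mul_right hS _)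
  rwa [← ENNReal.ofReal_natCast, ← ENNReal.ofReal_natCast (sawCount G v n),
    ← ENNReal.ofReal_mul (by positivity), ENNReal.ofReal_le_ofReal_iff (by positivity)] at this

lemma sawLimsup_lt_top_of_adj [G.LocallyFinite] {u v : V} (huv : G.Adj u v)
    (hu : sawLimsup G u < ⊤) : sawLimsup G v < ⊤ := by
  set T := (sawLimsup G u).toReal + 1
  have hT : 0 < T := by positivity
  have hlt : sawLimsup G u < ENNReal.ofReal T :=
    (ENNReal.lt_ofReal_iff_toReal_lt hu.ne).mpr (lt_add_one _)
  obtain ⟨D, hD⟩ := exists_forall_le_mul_pow (fun _ => Nat.cast_nonneg _) hT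
    (eventually_le_pow_of_limsup_lt hT.le hlt)
  have hbound : ∀ n, (sawCount G v n : ℝ) ≤ (D * T + D ^ 2 + D ^ 2 * n) * T ^ n := fun n => calc
    (sawCount G v n : ℝ) ≤ sawCount G u (n + 1) +
        ∑ t ∈ range (n + 1), (sawCount G u t : ℝ) * sawCount G u (n - t) := by
      exact_mod_cast sawCount_le_of_adj huv n
    _ ≤ D * T ^ (n + 1) + (n + 1) * (D ^ 2 * T ^ n) :=
      add_le_add (hD _) (sum_mul_le_of_le_mul_pow (fun _ => Nat.cast_nonneg _) hD n)
    _ = (D * T + D ^ 2 + D ^ 2 * n) * T ^ n := by ring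
  have hgrowth : ∀ᶠ n in atTop, (sawCount G v n : ℝ) ≤ (2 * T) ^ n := by
    filter_upwards [eventually_affine_mul_pow_lt_pow (D * T + D ^ 2) (D ^ 2) hT.le
      (by linarith : T < 2 * T)] with n hn
    exact (hbound n).trans hn.le
  exact (limsup_le_ofReal_of_eventually_le_pow (by positivity) hgrowth).trans_lt
    ENNReal.ofReal_lt_top

lemma sawLiminf_eq_of_adj [G.LocallyFinite]
    (hμ : Tendsto (fun n : ℕ => sawSupE G n ^ (1 / (n : ℝ))) atTop (𝓝 μ)) (hμ_top : μ ≠ ⊤)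
    {u v : V} (huv : G.Adj u v) (hu : sawLiminf G u = μ) : sawLiminf G v = μ := by
  refine le_antisymm ((sawLiminf_le_sawLimsup v).trans (sawLimsup_le hμ v))
    (le_of_not_gt fun hlt => ?_)
  obtain ⟨a, ha, hva, haμ⟩ := ENNReal.lt_iff_exists_real_btwn.mp hlt
  have hm : 0 < μ.toReal := ENNReal.toReal_pos (ne_bot_of_gt haμ) hμ_top
  have lt_toReal {b : ℝ} (hb : 0 ≤ b) : ENNReal.ofReal b < μ ↔ b < μ.toReal :=
    ENNReal.ofReal_lt_iff_lt_toReal hb hμ_top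
  have hu_low {γ : ℝ} (hγ : 0 ≤ γ) (hγm : γ < μ.toReal) : ENNReal.ofReal γ < sawLiminf G u :=
    hu ▸ (lt_toReal hγ).mpr hγm
  have hgrowth := eventually_pow_le_of_le_succ_add_convolution
    (c := fun n => (sawCount G v n : ℝ)) (d := fun n => (sawCount G u n : ℝ))
    (fun _ => Nat.cast_nonneg _) hm ha ((lt_toReal ha).mp haμ)
    (fun B hB => eventually_le_pow_of_limsup_lt (hm.trans hB).le
      ((sawLimsup_le hμ v).trans_lt ((ENNReal.lt_ofReal_iff_toReal_lt hμ_top).mpr hB)))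
    (fun B hB => eventually_sawCount_add_le hμ (hm.trans hB).le
      ((ENNReal.lt_ofReal_iff_toReal_lt hμ_top).mpr hB) v)
    (fun γ hγ hγm => eventually_pow_le_of_lt_liminf hγ (hu_low hγ hγm))
    (fun n => by exact_mod_cast sawCount_le_of_adj huv.symm n)
  exact (ofReal_le_liminf_of_eventually_pow_le ha hgrowth).not_gt hva

end SawGrowth

theorem sawLiminf_eq_mu_of_exists_general
    {V : Type*} (G : SimpleGraph V)
    (hconn : G.Connected)
    (hdeg : ∀ v : V, (G.neighborSet v).Finite)
    (hfin : ∃ v : V, sawLimsup G v < ⊤)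
    (μ : ℝ≥0∞)
    (hμ : Filter.Tendsto (fun n : ℕ => sawSupE G n ^ (1 / (n : ℝ)))
      Filter.atTop (nhds μ))
    (hv : ∃ v : V, sawLiminf G v = μ) :
    ∀ u : V, sawLiminf G u = μ := by
  have : G.LocallyFinite := fun v => (hdeg v).fintype
  obtain ⟨w, hw⟩ := hfin
  obtain ⟨v, hv⟩ := hv
  have hμ_top : μ ≠ ⊤ := by
    have hv_fin : sawLimsup G v < ⊤ :=
      (hconn w v).induction_on_adj (fun _ _ h => sawLimsup_lt_top_of_adj h) hw
    exact (hv ▸ sawLiminf_le_sawLimsup v).trans_lt hv_fin |>.ne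
  exact fun u => (hconn v u).induction_on_adj (fun _ _ h => sawLiminf_eq_of_adj hμ hμ_top h) hv

theorem sawLiminf_eq_mu_of_exists
    {V : Type*} (G : SimpleGraph V)
    (hinf : Infinite V) (hconn : G.Connected)
    (hdeg : ∀ v : V, (G.neighborSet v).Finite)
    (hfin : ∃ v : V, sawLimsup G v < ⊤)
    (μ : ℝ≥0∞)
    (hμ : Filter.Tendsto (fun n : ℕ => sawSupE G n ^ (1 / (n : ℝ)))
      Filter.atTop (nhds μ))
    (hv : ∃ v : V, sawLiminf G v = μ) :
    ∀ u : V, sawLiminf G u = μ :=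
  sawLiminf_eq_mu_of_exists_general G hconn hdeg hfin μ hμ hv
end

section
/- Let Δ ≥ 3 and let G be an infinite, connected, quasi-transitive, Δ-regular simple graph. Then μ(G) = Δ−1 if and only if G contains no cycle, i.e., if and only if G is the Δ-regular tree. -/
/-!
Self-avoiding walks are non-backtracking, and from every vertex there are exactly
`Δ (Δ - 1) ^ (n - 1)` non-backtracking walks of length `n ≥ 1`; in a forest every non-backtracking
walk is self-avoiding, which gives `μ = Δ - 1` for the tree.

If `G` contains a cycle, quasi-transitivity puts an image of it within a bounded distance `R` of
every vertex. Hence there is one length `s` such that, whatever the last step `(f, x)` of a walk is,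
some non-backtracking continuation of length `s` revisits a vertex: step `R + 1` times away from
`f`, walk to the cycle cancelling backtracks, go once around it, and pad. So every block of `s`
steps of a self-avoiding walk admits at most `(Δ - 1) ^ s - 1` continuations, whence
`σ (1 + k s) ≤ Δ ((Δ - 1) ^ s - 1) ^ k` and `μ ≤ ((Δ - 1) ^ s - 1) ^ (1 / s) < Δ - 1`.
-/

open Filter Topology

/-- The supremum over vertices of the number of `n`-step self-avoiding walks. -/
noncomputable def sawSup {V : Type*} (G : SimpleGraph V) (n : ℕ) : ℕ :=
  sSup (Set.range fun v => sawCount G v n)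

lemma tendsto_mul_pow_rpow_one_div {a b q : ℝ} (p : ℝ) (ha : 0 < a) (hb : 0 < b) (hq : 0 < q) :
    Tendsto (fun k : ℕ => (a * b ^ k) ^ (1 / (p + q * k))) atTop (𝓝 (b ^ (1 / q))) := by
  have hlog : Tendsto (fun k : ℕ => (Real.log a / k + Real.log b) / (p / k + q)) atTop
      (𝓝 (Real.log b * (1 / q))) := by
    simpa [div_eq_mul_one_div (Real.log b), Pi.div_def] using
      ((tendsto_const_div_atTop_nhds_zero_nat (Real.log a)).add_const (Real.log b)).div
        ((tendsto_const_div_atTop_nhds_zero_nat p).add_const q) (by simpa using hq.ne')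
  rw [Real.rpow_def_of_pos hb]
  refine ((Real.continuous_exp.tendsto _).comp hlog).congr' ?_
  filter_upwards [eventually_gt_atTop 0] with k hk
  rw [Function.comp_apply, Real.rpow_def_of_pos (by positivity),
    Real.log_mul ha.ne' (by positivity), Real.log_pow]
  congr 1
  field_simp

lemma tendsto_rpow_one_div_of_eq_mul_pow {a : ℕ → ℕ} {A m : ℕ} (hA : 0 < A) (hm : 0 < m)
    (h : ∀ n, a (n + 1) = A * m ^ n) :
    Tendsto (fun n : ℕ => (a n : ℝ) ^ (1 / (n : ℝ))) atTop (𝓝 m) := by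
  rw [← tendsto_add_atTop_iff_nat 1]
  convert tendsto_mul_pow_rpow_one_div 1 (a := A) (b := m) (q := 1) (by positivity)
    (by positivity) one_pos using 2 with n
  · simp [h, add_comm]
  · simp

lemma lt_of_tendsto_rpow_one_div_of_le_mul_pow {a : ℕ → ℕ} {μ : ℝ}
    (hμ : Tendsto (fun n : ℕ => (a n : ℝ) ^ (1 / (n : ℝ))) atTop (𝓝 μ)) {A m s : ℕ}
    (hA : 0 < A) (hm : 2 ≤ m) (hs : 0 < s) (h : ∀ k, a (1 + k * s) ≤ A * (m ^ s - 1) ^ k) :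
    μ < m := by
  have hc : 1 ≤ m ^ s - 1 := by
    have := Nat.one_lt_pow hs.ne' (by omega : 1 < m); omega
  have hsub : Tendsto (fun k : ℕ => 1 + k * s) atTop atTop :=
    tendsto_atTop_mono (fun k => show k ≤ 1 + k * s by nlinarith) tendsto_id
  have hle : μ ≤ ((m ^ s - 1 : ℕ) : ℝ) ^ (1 / (s : ℝ)) := by
    refine le_of_tendsto_of_tendsto' (hμ.comp hsub) (tendsto_mul_pow_rpow_one_div 1 (a := A)
      (by positivity) (by exact_mod_cast hc) (by positivity)) fun k => ?_
    have hk : ((1 + k * s : ℕ) : ℝ) = 1 + s * k := by push_cast; ring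
    simp only [Function.comp_apply, hk]
    exact Real.rpow_le_rpow (by positivity) (by exact_mod_cast h k) (by positivity)
  refine hle.trans_lt ?_
  rw [one_div, Real.rpow_inv_lt_iff_of_pos (by positivity) (by positivity) (by positivity),
    Real.rpow_natCast]
  exact_mod_cast Nat.sub_lt (by positivity) one_pos

lemma Nat.card_sigma_of_card_eq {ι : Type*} {β : ι → Type*} [Finite ι] [∀ i, Finite (β i)]
    {c : ℕ} (h : ∀ i, Nat.card (β i) = c) : Nat.card (Σ i, β i) = Nat.card ι * c := by
  have := Fintype.ofFinite ι
  simp [Nat.card_sigma, h, Nat.card_eq_fintype_card]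

lemma Nat.card_sigma_le_of_card_le {ι : Type*} {β : ι → Type*} [Finite ι]
    [∀ i, Finite (β i)] {c : ℕ} (h : ∀ i, Nat.card (β i) ≤ c) :
    Nat.card (Σ i, β i) ≤ Nat.card ι * c := by
  have := Fintype.ofFinite ι
  simpa [Nat.card_sigma, Nat.card_eq_fintype_card] using
    Finset.sum_le_card_nsmul Finset.univ _ c fun i _ => h i

namespace SimpleGraph

variable {V : Type*} (G : SimpleGraph V)

/-- `G.IsNonBacktrackingFrom f x l`: the walk `x :: l` never steps straight back to the vertex it
has just left, where it is taken to have entered `x` from `f`. -/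
def IsNonBacktrackingFrom : V → V → List V → Prop
  | _, _, [] => True
  | f, x, w :: l => G.Adj x w ∧ w ≠ f ∧ IsNonBacktrackingFrom x w l

def lastStep : V → V → List V → V × V
  | f, x, [] => (f, x)
  | _, x, w :: l => lastStep x w l

variable {G} {f x y : V} {l l₁ l₂ : List V}

@[simp] lemma isNonBacktrackingFrom_nil : G.IsNonBacktrackingFrom f x [] := trivial

@[simp] lemma isNonBacktrackingFrom_cons {w : V} :
    G.IsNonBacktrackingFrom f x (w :: l) ↔
      G.Adj x w ∧ w ≠ f ∧ G.IsNonBacktrackingFrom x w l := Iff.rfl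

@[simp] lemma lastStep_nil : lastStep f x [] = (f, x) := rfl

@[simp] lemma lastStep_cons {w : V} : lastStep f x (w :: l) = lastStep x w l := rfl

lemma lastStep_append :
    lastStep f x (l₁ ++ l₂) = lastStep (lastStep f x l₁).1 (lastStep f x l₁).2 l₂ := by
  induction l₁ generalizing f x <;> simp [*]

lemma lastStep_snd_mem : (lastStep f x l).2 ∈ x :: l := by
  induction l generalizing f x with
  | nil => simp
  | cons w l ih => exact List.mem_cons_of_mem x ih

lemma isNonBacktrackingFrom_append :
    G.IsNonBacktrackingFrom f x (l₁ ++ l₂) ↔ G.IsNonBacktrackingFrom f x l₁ ∧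
      G.IsNonBacktrackingFrom (lastStep f x l₁).1 (lastStep f x l₁).2 l₂ := by
  induction l₁ generalizing f x <;> simp [*, and_assoc]

namespace IsNonBacktrackingFrom

lemma isChain (h : G.IsNonBacktrackingFrom f x l) : (x :: l).IsChain G.Adj := by
  induction l generalizing f x with
  | nil => exact List.isChain_singleton x
  | cons w l ih => exact List.isChain_cons_cons.2 ⟨h.1, ih h.2.2⟩

lemma adj_lastStep (h : G.IsNonBacktrackingFrom f x l) (hl : l ≠ []) :
    G.Adj (lastStep f x l).1 (lastStep f x l).2 := by
  induction l generalizing f x with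
  | nil => exact absurd rfl hl
  | cons w l ih =>
    rcases l with _ | ⟨w', l⟩
    · exact h.1
    · exact ih h.2.2 (List.cons_ne_nil w' l)

end IsNonBacktrackingFrom

lemma isNonBacktrackingFrom_of_nodup (hc : (x :: l).IsChain G.Adj) (hn : (x :: l).Nodup)
    (hf : l.head? ≠ some f) : G.IsNonBacktrackingFrom f x l := by
  induction l generalizing f x with
  | nil => trivial
  | cons w l ih =>
    refine ⟨hc.rel, fun h => hf (by rw [h]; rfl), ih hc.of_cons hn.of_cons fun h => ?_⟩
    exact (List.nodup_cons.1 hn).1 (List.mem_cons_of_mem w (List.mem_of_mem_head? h))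

lemma exists_isNonBacktrackingFrom_append (hdeg : ∀ x f : V, ∃ w, G.Adj x w ∧ w ≠ f)
    (h : G.IsNonBacktrackingFrom f x l) (n : ℕ) :
    ∃ m : List V, m.length = n ∧ G.IsNonBacktrackingFrom f x (l ++ m) := by
  suffices ∀ n (f x : V), ∃ m : List V, m.length = n ∧ G.IsNonBacktrackingFrom f x m by
    obtain ⟨m, hm, hnb⟩ := this n _ _
    exact ⟨m, hm, isNonBacktrackingFrom_append.2 ⟨h, hnb⟩⟩
  intro n
  induction n with
  | zero => exact fun _ _ => ⟨[], rfl, trivial⟩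
  | succ n ih =>
    intro f x
    obtain ⟨w, hxw, hwf⟩ := hdeg x f
    obtain ⟨m, hm, hnb⟩ := ih x w
    exact ⟨w :: m, by simp [hm], hxw, hwf, hnb⟩

variable (G) in
def NBList (f x : V) (n : ℕ) : Type _ :=
  {l : List V // G.IsNonBacktrackingFrom f x l ∧ l.length = n}

variable (G) in
/-- Since `G` has no loops, `G.SAWList v v n` consists of all `n`-step self-avoiding walks
from `v`. -/
def SAWList (f x : V) (n : ℕ) : Type _ :=
  {l : G.NBList f x n // (x :: l.1).Nodup}

instance : Unique (G.NBList f x 0) where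
  default := ⟨[], trivial, rfl⟩
  uniq l := Subtype.ext (List.length_eq_zero_iff.1 l.2.2)

variable (G) in
def nbListSuccEquiv (f x : V) (n : ℕ) :
    G.NBList f x (n + 1) ≃ Σ w : ↥(G.neighborSet x \ {f}), G.NBList x w n where
  toFun
    | ⟨w :: l, ⟨hw, hwf, hl⟩, hlen⟩ =>
      ⟨⟨w, hw, hwf⟩, ⟨l, hl, Nat.succ.inj hlen⟩⟩
  invFun p := ⟨p.1.1 :: p.2.1, ⟨p.1.2.1, p.1.2.2, p.2.2.1⟩, by simp [p.2.2.2]⟩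
  left_inv | ⟨_ :: _, ⟨_, _, _⟩, _⟩ => rfl
  right_inv _ := rfl

/-- Follow `p`, cancelling every step that backtracks along `l`; since `p.length ≤ l.length`, the
cancellations never run past the start of `l`. -/
lemma exists_isNonBacktrackingFrom_lastStep_eq {u y : V} (p : G.Walk u y) :
    ∀ {l : List V}, G.IsNonBacktrackingFrom f x l → (lastStep f x l).2 = u →
      p.length ≤ l.length → ∃ l', G.IsNonBacktrackingFrom f x l' ∧
        (lastStep f x l').2 = y ∧ l'.length ≤ l.length + p.length := by
  induction p with
  | nil => exact fun h hu _ => ⟨_, h, hu, le_self_add⟩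
  | @cons u b y hub p ih =>
    intro l h hu hlen
    by_cases hb : b = (lastStep f x l).1
    · obtain rfl | ⟨l₀, e, rfl⟩ := l.eq_nil_or_concat'
      · simp at hlen
      have hb₀ : (lastStep f x l₀).2 = b := by simpa [lastStep_append] using hb.symm
      simp only [Walk.length_cons, List.length_append, List.length_singleton] at hlen ⊢
      obtain ⟨l', h', hy, hl'⟩ := ih (isNonBacktrackingFrom_append.1 h).1 hb₀ (by omega)
      exact ⟨l', h', hy, by omega⟩
    · have h' : G.IsNonBacktrackingFrom f x (l ++ [b]) :=
        isNonBacktrackingFrom_append.2 ⟨h, by rw [hu]; exact hub, hb, trivial⟩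
      simp only [Walk.length_cons] at hlen ⊢
      obtain ⟨l', h', hy, hl'⟩ := ih h' (by simp [lastStep_append]) (by simp; omega)
      exact ⟨l', h', hy, by simp only [List.length_append, List.length_singleton] at hl'; omega⟩

lemma Walk.IsCycle.isNonBacktrackingFrom_support_tail {c : G.Walk y y} (hc : c.IsCycle)
    (hf : c.snd ≠ f) : G.IsNonBacktrackingFrom f y c.support.tail := by
  cases c with
  | nil => exact absurd hc Walk.not_isCycle_nil
  | cons h p =>
    obtain ⟨hp, he⟩ := (Walk.cons_isCycle_iff p h).1 hc
    rw [Walk.support_cons, List.tail_cons, ← p.cons_tail_support]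
    refine ⟨h, by simpa using hf, isNonBacktrackingFrom_of_nodup ?_ ?_ ?_⟩
    · rw [p.cons_tail_support]; exact p.isChain_adj_support
    · rw [p.cons_tail_support]; exact hp.support_nodup
    · cases p with
      | nil => simp
      | cons h' p' =>
        intro hy
        rw [Walk.support_cons, List.tail_cons, ← p'.cons_tail_support, List.head?_cons,
          Option.some_inj] at hy
        subst hy
        exact he (by simp [Sym2.eq_swap])

lemma Walk.IsCycle.exists_isNonBacktrackingFrom {c : G.Walk y y} (hc : c.IsCycle) (f : V) :
    ∃ l, G.IsNonBacktrackingFrom f y l ∧ l.length = c.length ∧ y ∈ l := by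
  by_cases hf : c.snd = f
  · refine ⟨c.reverse.support.tail, hc.reverse.isNonBacktrackingFrom_support_tail ?_, by simp,
      Walk.end_mem_tail_support hc.reverse.not_nil⟩
    rw [Walk.snd_reverse, ← hf]
    exact hc.snd_ne_penultimate.symm
  · exact ⟨c.support.tail, hc.isNonBacktrackingFrom_support_tail hf, by simp,
      Walk.end_mem_tail_support hc.not_nil⟩

lemma exists_walk_to_orbit (hconn : G.Connected)
    (hquasi : ∃ W : Finset V, ∀ v : V, ∃ φ : G ≃g G, φ v ∈ W) (x₀ : V) :
    ∃ R, ∀ v, ∃ φ : G ≃g G, ∃ p : G.Walk v (φ x₀), p.length ≤ R := by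
  obtain ⟨W, hW⟩ := hquasi
  refine ⟨W.sup fun w => G.dist w x₀, fun v => ?_⟩
  obtain ⟨φ, hφ⟩ := hW v
  obtain ⟨p, hp⟩ := hconn.exists_walk_length_eq_dist (φ v) x₀
  refine ⟨φ.symm, (p.map φ.symm.toHom).copy (φ.symm_apply_apply v) rfl, ?_⟩
  rw [Walk.length_copy, Walk.length_map, hp]
  exact Finset.le_sup (f := fun w => G.dist w x₀) hφ

theorem exists_nbList_not_nodup (hdeg : ∀ x f : V, ∃ w, G.Adj x w ∧ w ≠ f)
    (hconn : G.Connected) (hquasi : ∃ W : Finset V, ∀ v : V, ∃ φ : G ≃g G, φ v ∈ W)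
    (hcyc : ¬G.IsAcyclic) :
    ∃ s, 0 < s ∧ ∀ f x : V, ∃ l : G.NBList f x s, ¬(x :: l.1).Nodup := by
  obtain ⟨x₀, c, hc⟩ : ∃ x₀ : V, ∃ c : G.Walk x₀ x₀, c.IsCycle := by
    simpa [IsAcyclic] using hcyc
  obtain ⟨R, hR⟩ := exists_walk_to_orbit hconn hquasi x₀
  refine ⟨R + 1 + R + c.length, by omega, fun f x => ?_⟩
  obtain ⟨l₁, hl₁len, hl₁⟩ := exists_isNonBacktrackingFrom_append hdeg
    (isNonBacktrackingFrom_nil (f := f) (x := x)) (R + 1)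
  rw [List.nil_append] at hl₁
  obtain ⟨φ, p, hp⟩ := hR (lastStep f x l₁).2
  obtain ⟨l₂, hl₂, hend, hl₂len⟩ :=
    exists_isNonBacktrackingFrom_lastStep_eq p hl₁ rfl (by omega)
  obtain ⟨loop, hloop, hlooplen, hmem⟩ :=
    (hc.map (f := φ.toHom) φ.injective).exists_isNonBacktrackingFrom (lastStep f x l₂).1
  obtain ⟨m, hmlen, hm⟩ := exists_isNonBacktrackingFrom_append hdeg
    (isNonBacktrackingFrom_append.2 ⟨hl₂, hend ▸ hloop⟩)
    (R + 1 + R + c.length - (l₂ ++ loop).length)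
  refine ⟨⟨l₂ ++ loop ++ m, hm, ?_⟩, fun hnd => ?_⟩
  · simp only [List.length_append, Walk.length_map] at hmlen hlooplen ⊢
    omega
  · have := hnd.sublist (show ((x :: l₂) ++ loop).Sublist (x :: (l₂ ++ loop ++ m)) by simp)
    exact (List.nodup_append.1 this).2.2 _ (hend ▸ lastStep_snd_mem) _ hmem rfl

lemma Walk.sigma_ext_support_s10 {v u u' : V} {p : G.Walk v u} {q : G.Walk v u'}
    (h : p.support = q.support) : (⟨u, p⟩ : Σ u, G.Walk v u) = ⟨u', q⟩ := by
  obtain rfl : u = u' := by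
    rw [← p.getLast_support, ← q.getLast_support]
    simp only [h]
  rw [Walk.ext_support h]

lemma sawCount_eq_card_sawList (v : V) (n : ℕ) : sawCount G v n = Nat.card (G.SAWList v v n) := by
  have hnodup (p : {p : Σ u, G.Walk v u // p.2.IsPath ∧ p.2.length = n}) :
      (v :: p.1.2.support.tail).Nodup := by
    rw [Walk.cons_tail_support]; exact p.2.1.support_nodup
  refine Nat.card_congr
    (.ofBijective (fun p => ⟨⟨p.1.2.support.tail, ?_, ?_⟩, hnodup p⟩) ⟨?_, ?_⟩)
  · refine isNonBacktrackingFrom_of_nodup ?_ (hnodup p) fun h => ?_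
    · rw [Walk.cons_tail_support]; exact p.1.2.isChain_adj_support
    · exact (List.nodup_cons.1 (hnodup p)).1 (List.mem_of_mem_head? h)
  · simp [p.2.2]
  · rintro ⟨⟨u, p⟩, hp⟩ ⟨⟨u', q⟩, hq⟩ h
    have h' : p.support.tail = q.support.tail := congrArg (fun r : G.SAWList v v n => r.1.1) h
    exact Subtype.ext (Walk.sigma_ext_support_s10 (by
      rw [← p.cons_tail_support, ← q.cons_tail_support, h']))
  · rintro ⟨⟨l, hl, hlen⟩, hnd⟩
    let p : G.Walk v _ := Walk.ofSupport (v :: l) (List.cons_ne_nil v l) hl.isChain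
    have hp : p.support = v :: l := Walk.support_ofSupport _ _
    refine ⟨⟨⟨_, p⟩, ?_, ?_⟩, ?_⟩
    · rwa [Walk.isPath_def, hp]
    · rw [← Nat.add_right_cancel_iff, ← Walk.length_support, hp, List.length_cons, hlen]
    · exact Subtype.ext (Subtype.ext (by simp [hp]))

lemma IsAcyclic.nodup_of_isNonBacktrackingFrom (hG : G.IsAcyclic) (hfx : G.Adj f x)
    (h : G.IsNonBacktrackingFrom f x l) : (f :: x :: l).Nodup := by
  induction l generalizing f x with
  | nil => simp [hfx.ne]
  | cons w l ih =>
    have hn := ih h.1 h.2.2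
    obtain ⟨p, hp, hsnd⟩ : ∃ p : G.Walk x ((w :: l).getLast (List.cons_ne_nil w l)),
        p.support = x :: w :: l ∧ p.snd = w :=
      ⟨.cons h.1 (.ofSupport (w :: l) _ h.2.2.isChain),
        congrArg (x :: ·) (Walk.support_ofSupport _ _), Walk.snd_cons _ _⟩
    refine List.nodup_cons.2 ⟨fun hf => h.2.1 ?_, hn⟩
    have := hG.eq_snd_of_adj_start (p.isPath_def.2 (hp ▸ hn)) hfx.symm (hp ▸ hf)
    rw [this, hsnd]

variable (G) in
def splitSAWList (f x : V) (t s : ℕ) (p : G.SAWList f x (t + s)) :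
    Σ r : G.SAWList f x t, G.SAWList (lastStep f x r.1.1).1 (lastStep f x r.1.1).2 s :=
  have hnb : G.IsNonBacktrackingFrom f x (p.1.1.take t ++ p.1.1.drop t) := by
    rw [List.take_append_drop]; exact p.1.2.1
  have hnd : ((x :: p.1.1.take t) ++ p.1.1.drop t).Nodup := by
    rw [List.cons_append, List.take_append_drop]; exact p.2
  ⟨⟨⟨p.1.1.take t, (isNonBacktrackingFrom_append.1 hnb).1, by simp [p.1.2.2]⟩,
      (List.nodup_append.1 hnd).1⟩,
    ⟨⟨p.1.1.drop t, (isNonBacktrackingFrom_append.1 hnb).2, by simp [p.1.2.2]⟩,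
      List.nodup_cons.2 ⟨fun h => (List.nodup_append.1 hnd).2.2 _ lastStep_snd_mem _ h rfl,
        (List.nodup_append.1 hnd).2.1⟩⟩⟩

lemma splitSAWList_injective (f x : V) (t s : ℕ) : (G.splitSAWList f x t s).Injective := by
  refine .of_comp (f := fun q => q.1.1.1 ++ q.2.1.1) fun p q h => Subtype.ext (Subtype.ext ?_)
  simpa [splitSAWList] using h

lemma sawSup_le {n B : ℕ} (h : ∀ v, sawCount G v n ≤ B) : sawSup G n ≤ B :=
  csSup_le' (Set.forall_mem_range.2 h)

lemma sawSup_eq [Nonempty V] {n B : ℕ} (h : ∀ v, sawCount G v n = B) : sawSup G n = B := by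
  simp [sawSup, h]

section LocallyFinite

variable [G.LocallyFinite] {Δ : ℕ}

instance finite_nbList (f x : V) (n : ℕ) : Finite (G.NBList f x n) := by
  induction n generalizing f x with
  | zero => infer_instance
  | succ n ih => exact Finite.of_equiv _ (G.nbListSuccEquiv f x n).symm

instance finite_sawList (f x : V) (n : ℕ) : Finite (G.SAWList f x n) := Subtype.finite

lemma ncard_neighborSet (v : V) : (G.neighborSet v).ncard = G.degree v := by
  rw [← Nat.card_coe_set_eq, Nat.card_eq_fintype_card, card_neighborSet_eq_degree]

lemma card_nbList (hreg : G.IsRegularOfDegree Δ) (hxf : G.Adj x f) (n : ℕ) :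
    Nat.card (G.NBList f x n) = (Δ - 1) ^ n := by
  induction n generalizing f x with
  | zero => simp
  | succ n ih =>
    rw [Nat.card_congr (G.nbListSuccEquiv f x n), Nat.card_sigma_of_card_eq fun w => ih w.2.1.symm,
      Nat.card_coe_set_eq, Set.ncard_sdiff_singleton_of_mem (show f ∈ G.neighborSet x from hxf),
      ncard_neighborSet, hreg x, pow_succ, mul_comm]

lemma card_nbList_self (hreg : G.IsRegularOfDegree Δ) (v : V) (n : ℕ) :
    Nat.card (G.NBList v v (n + 1)) = Δ * (Δ - 1) ^ n := by
  rw [Nat.card_congr (G.nbListSuccEquiv v v n),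
    Nat.card_sigma_of_card_eq fun w => card_nbList hreg w.2.1.symm n,
    Set.sdiff_singleton_eq_self G.notMem_neighborSet_self, Nat.card_coe_set_eq,
    ncard_neighborSet, hreg v]

lemma IsAcyclic.card_sawList_self (hG : G.IsAcyclic) (hreg : G.IsRegularOfDegree Δ) (v : V)
    (n : ℕ) : Nat.card (G.SAWList v v (n + 1)) = Δ * (Δ - 1) ^ n := by
  rw [← card_nbList_self hreg v n]
  refine Nat.card_congr (Equiv.subtypeUnivEquiv fun l => ?_)
  obtain ⟨_ | ⟨w, l⟩, h, hlen⟩ := l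
  · simp at hlen
  · exact hG.nodup_of_isNonBacktrackingFrom h.1 h.2.2

lemma card_sawList_add_le {s t C : ℕ} (ht : t ≠ 0)
    (hC : ∀ f x, G.Adj x f → Nat.card (G.SAWList f x s) ≤ C) (f x : V) :
    Nat.card (G.SAWList f x (t + s)) ≤ Nat.card (G.SAWList f x t) * C :=
  (Nat.card_le_card_of_injective _ (G.splitSAWList_injective f x t s)).trans <|
    Nat.card_sigma_le_of_card_le fun r => hC _ _ (r.1.2.1.adj_lastStep
      (List.ne_nil_of_length_pos (by rw [r.1.2.2]; omega))).symm

lemma card_sawList_self_le (hreg : G.IsRegularOfDegree Δ) {s C : ℕ}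
    (hC : ∀ f x, G.Adj x f → Nat.card (G.SAWList f x s) ≤ C) (v : V) (k : ℕ) :
    Nat.card (G.SAWList v v (1 + k * s)) ≤ Δ * C ^ k := by
  induction k with
  | zero =>
    rw [zero_mul, add_zero, pow_zero, mul_one]
    exact (Finite.card_subtype_le _).trans (by simpa using (card_nbList_self hreg v 0).le)
  | succ k ih =>
    calc Nat.card (G.SAWList v v (1 + (k + 1) * s))
        = Nat.card (G.SAWList v v (1 + k * s + s)) := by rw [add_mul, one_mul, add_assoc]
      _ ≤ Nat.card (G.SAWList v v (1 + k * s)) * C := card_sawList_add_le (by omega) hC v v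
      _ ≤ Δ * C ^ (k + 1) := by rw [pow_succ, ← mul_assoc]; exact Nat.mul_le_mul_right C ih

lemma card_sawList_lt (hreg : G.IsRegularOfDegree Δ) {s : ℕ} (hxf : G.Adj x f)
    (h : ∃ l : G.NBList f x s, ¬(x :: l.1).Nodup) :
    Nat.card (G.SAWList f x s) < (Δ - 1) ^ s := by
  obtain ⟨l, hl⟩ := h
  exact card_nbList hreg hxf s ▸ Finite.card_subtype_lt hl

lemma exists_adj_ne_of_isRegularOfDegree (hreg : G.IsRegularOfDegree Δ) (hΔ : 2 ≤ Δ)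
    (x f : V) : ∃ w, G.Adj x w ∧ w ≠ f := by
  have h := Set.pred_ncard_le_ncard_sdiff_singleton (G.neighborSet x) f
  rw [ncard_neighborSet, hreg x] at h
  obtain ⟨w, hw, hwf⟩ := Set.nonempty_of_ncard_ne_zero (s := G.neighborSet x \ {f}) (by omega)
  exact ⟨w, hw, hwf⟩

lemma IsAcyclic.sawSup_succ [Nonempty V] (hG : G.IsAcyclic) (hreg : G.IsRegularOfDegree Δ)
    (n : ℕ) : sawSup G (n + 1) = Δ * (Δ - 1) ^ n :=
  sawSup_eq fun v => (sawCount_eq_card_sawList v _).trans (hG.card_sawList_self hreg v n)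

theorem exists_sawSup_le_of_not_isAcyclic (hreg : G.IsRegularOfDegree Δ) (hΔ : 2 ≤ Δ)
    (hconn : G.Connected) (hquasi : ∃ W : Finset V, ∀ v : V, ∃ φ : G ≃g G, φ v ∈ W)
    (hcyc : ¬G.IsAcyclic) :
    ∃ s, 0 < s ∧ ∀ k, sawSup G (1 + k * s) ≤ Δ * ((Δ - 1) ^ s - 1) ^ k := by
  obtain ⟨s, hs, hbad⟩ :=
    exists_nbList_not_nodup (exists_adj_ne_of_isRegularOfDegree hreg hΔ) hconn hquasi hcyc
  refine ⟨s, hs, fun k => sawSup_le fun v => ?_⟩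
  rw [sawCount_eq_card_sawList]
  exact card_sawList_self_le hreg
    (fun f x hxf => Nat.le_sub_one_of_lt (card_sawList_lt hreg hxf (hbad f x))) v k

end LocallyFinite

end SimpleGraph

theorem mu_eq_iff_tree_general
    {V : Type*} (G : SimpleGraph V) (Δ : ℕ) (hΔ : 3 ≤ Δ)
    (hconn : G.Connected)
    (hquasi : ∃ W : Finset V, ∀ v : V, ∃ φ : G ≃g G, φ v ∈ W)
    (hreg : ∀ v : V, (G.neighborSet v).ncard = Δ) :
    ∀ μ : ℝ,
      Filter.Tendsto (fun n : ℕ => (sawSup G n : ℝ) ^ (1 / (n : ℝ)))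
        Filter.atTop (nhds μ) →
      ((μ = (Δ : ℝ) - 1 ↔ G.IsAcyclic) ∧ (μ = (Δ : ℝ) - 1 ↔ G.IsTree)) := by
  intro μ hμ
  have : G.LocallyFinite := fun v => (Set.finite_of_ncard_pos (s := G.neighborSet v)
    (by rw [hreg v]; omega)).fintype
  have hreg' : G.IsRegularOfDegree Δ := fun v => (G.ncard_neighborSet v).symm.trans (hreg v)
  have hcast : ((Δ - 1 : ℕ) : ℝ) = Δ - 1 := by rw [Nat.cast_sub (by omega), Nat.cast_one]
  have key : μ = Δ - 1 ↔ G.IsAcyclic := by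
    refine ⟨fun hμΔ => by_contra fun hcyc => ?_, fun hG => ?_⟩
    · obtain ⟨s, hs, hle⟩ :=
        G.exists_sawSup_le_of_not_isAcyclic hreg' (by omega) hconn hquasi hcyc
      have := lt_of_tendsto_rpow_one_div_of_le_mul_pow hμ (by omega) (by omega) hs hle
      rw [hcast] at this
      exact this.ne hμΔ
    · have := hconn.nonempty
      rw [← hcast]
      exact tendsto_nhds_unique hμ
        (tendsto_rpow_one_div_of_eq_mul_pow (by omega) (by omega) (hG.sawSup_succ hreg'))
  refine ⟨key, key.trans ?_⟩
  rw [SimpleGraph.isTree_iff]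
  exact ⟨fun h => ⟨hconn, h⟩, And.right⟩

theorem mu_eq_iff_tree
    {V : Type*} (G : SimpleGraph V) (Δ : ℕ) (hΔ : 3 ≤ Δ)
    (hinf : Infinite V) (hconn : G.Connected)
    (hquasi : ∃ W : Finset V, ∀ v : V, ∃ φ : G ≃g G, φ v ∈ W)
    (hreg : ∀ v : V, (G.neighborSet v).ncard = Δ) :
    ∀ μ : ℝ,
      Filter.Tendsto (fun n : ℕ => (sawSup G n : ℝ) ^ (1 / (n : ℝ)))
        Filter.atTop (nhds μ) →
      ((μ = (Δ : ℝ) - 1 ↔ G.IsAcyclic) ∧ (μ = (Δ : ℝ) - 1 ↔ G.IsTree)) :=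
  mu_eq_iff_tree_general G Δ hΔ hconn hquasi hreg
end
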